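/- In a tree-like structure, any directed pointer chain whose consecutive pointer directions obey the transition rules (L must be followed by L; R must be followed by R; P may be followed by P, L, or R; Ch_R may be followed by Ch_R, L, or R) cannot form a directed cycle. -/
import Mathlib


inductive PMove | P | ChR | L | R
deriving DecidableEq

/-- One pointer move on coordinates `(l,k)` of a tree-like structure:
`P : (l,k) → (l-1,⌊k/2⌋)`, `ChR : (l,k) → (l+1,2k+1)`, `L : (l,k) → (l,k-1)`,
`R : (l,k) → (l,k+1)`. -/
def moveRel : PMove → ℕ × ℕ → ℕ × ℕ → Prop
  | .P, a, b => a.1 = b.1 + 1 ∧ b.2 = a.2 / 2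
  | .ChR, a, b => b.1 = a.1 + 1 ∧ b.2 = 2 * a.2 + 1
  | .L, a, b => b.1 = a.1 ∧ a.2 = b.2 + 1
  | .R, a, b => b.1 = a.1 ∧ b.2 = a.2 + 1

/-- Allowed transitions between consecutive pointer moves: `L` must be followed by `L`,
`R` by `R`, `P` by one of `{P,L,R}`, `ChR` by one of `{ChR,L,R}`. -/
def allowedTrans : PMove → PMove → Prop
  | .L, m => m = .L
  | .R, m => m = .R
  | .P, m => m = .P ∨ m = .L ∨ m = .R
  | .ChR, m => m = .ChR ∨ m = .L ∨ m = .R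

/-- In a tree-like structure, no pointer chain obeying the transition rules can form a
directed cycle. -/
theorem no_pointer_cycle
    (ℓ m : ℕ) (v : Fin (m + 1) → ℕ × ℕ) (mv : Fin m → PMove)
    (hvalid : ∀ i, (v i).1 < ℓ ∧ (v i).2 < 2 ^ (v i).1)
    (hstep : ∀ i : Fin m, moveRel (mv i) (v i.castSucc) (v i.succ))
    (htrans : ∀ (i : ℕ) (h1 : i + 1 < m),
      allowedTrans (mv ⟨i, Nat.lt_of_succ_lt h1⟩) (mv ⟨i + 1, h1⟩))
    (hcyc : v 0 = v (Fin.last m)) : m = 0 := by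
  by_contra hm
  have hm0 : 0 < m := Nat.pos_of_ne_zero hm
  -- uniform reindexing of `v` by naturals
  set V : ℕ → ℕ × ℕ := fun i => v ⟨min i m, by omega⟩ with hVdef
  have key : ∀ (i : ℕ) (hi : i < m), moveRel (mv ⟨i, hi⟩) (V i) (V (i + 1)) := by
    intro i hi
    have h1 : V i = v (Fin.castSucc ⟨i, hi⟩) :=
      congrArg v (Fin.ext (by simp [Nat.min_eq_left hi.le]))
    have h2 : V (i + 1) = v (Fin.succ ⟨i, hi⟩) :=
      congrArg v (Fin.ext (by simp [Nat.min_eq_left hi]))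
    rw [h1, h2]; exact hstep ⟨i, hi⟩
  have hV0 : V 0 = v 0 := congrArg v (Fin.ext (by simp))
  have hVm : V m = v (Fin.last m) := congrArg v (Fin.ext (by simp [Fin.last]))
  have hcyc' : V 0 = V m := by rw [hV0, hVm]; exact hcyc
  have hc1 : (V 0).1 = (V m).1 := congrArg Prod.fst hcyc'
  have hc2 : (V 0).2 = (V m).2 := congrArg Prod.snd hcyc'
  cases h0 : mv ⟨0, hm0⟩ with
  | L =>
    have hall : ∀ (i : ℕ) (hi : i < m), mv ⟨i, hi⟩ = .L := by
      intro i
      induction i with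
      | zero => intro hi; exact h0
      | succ n ih =>
        intro hi
        have ht := htrans n hi
        rw [ih (Nat.lt_of_succ_lt hi)] at ht
        exact ht
    have hk : ∀ (i : ℕ), i ≤ m → (V i).2 + i = (V 0).2 := by
      intro i
      induction i with
      | zero => intro _; rfl
      | succ n ih =>
        intro hi
        have hn : n < m := hi
        have hs := key n hn
        rw [hall n hn] at hs
        obtain ⟨h1, h2⟩ := hs
        have := ih (Nat.le_of_lt hn)
        omega
    have := hk m le_rfl
    omega
  | R =>
    have hall : ∀ (i : ℕ) (hi : i < m), mv ⟨i, hi⟩ = .R := by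
      intro i
      induction i with
      | zero => intro hi; exact h0
      | succ n ih =>
        intro hi
        have ht := htrans n hi
        rw [ih (Nat.lt_of_succ_lt hi)] at ht
        exact ht
    have hk : ∀ (i : ℕ), i ≤ m → (V i).2 = (V 0).2 + i := by
      intro i
      induction i with
      | zero => intro _; rfl
      | succ n ih =>
        intro hi
        have hn : n < m := hi
        have hs := key n hn
        rw [hall n hn] at hs
        obtain ⟨h1, h2⟩ := hs
        have := ih (Nat.le_of_lt hn)
        omega
    have := hk m le_rfl
    omega
  | P =>
    have hno : ∀ (i : ℕ) (hi : i < m), mv ⟨i, hi⟩ ≠ .ChR := by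
      intro i
      induction i with
      | zero => intro hi h; rw [h0] at h; exact PMove.noConfusion h
      | succ n ih =>
        intro hi hC
        have ht := htrans n hi
        rw [hC] at ht
        cases h : mv ⟨n, Nat.lt_of_succ_lt hi⟩ with
        | P => rw [h] at ht; rcases ht with h' | h' | h' <;> exact PMove.noConfusion h'
        | ChR => exact ih (Nat.lt_of_succ_lt hi) h
        | L => rw [h] at ht; exact PMove.noConfusion ht
        | R => rw [h] at ht; exact PMove.noConfusion ht
    have hmono : ∀ (i : ℕ) (hi : i < m), (V (i + 1)).1 ≤ (V i).1 := by
      intro i hi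
      have hs := key i hi
      cases h : mv ⟨i, hi⟩ with
      | P => rw [h] at hs; obtain ⟨ha, hb⟩ := hs; omega
      | ChR => exact absurd h (hno i hi)
      | L => rw [h] at hs; obtain ⟨ha, hb⟩ := hs; omega
      | R => rw [h] at hs; obtain ⟨ha, hb⟩ := hs; omega
    have hchain : ∀ (i : ℕ), 1 ≤ i → i ≤ m → (V i).1 ≤ (V 1).1 := by
      intro i
      induction i with
      | zero => omega
      | succ n ih =>
        intro _ hi
        rcases Nat.eq_zero_or_pos n with h | h
        · subst h; exact le_rfl
        · exact le_trans (hmono n (by omega)) (ih h (by omega))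
    have hfirst := key 0 hm0
    rw [h0] at hfirst
    have h1 := hfirst.1
    norm_num at h1
    have hlast := hchain m hm0 le_rfl
    omega
  | ChR =>
    have hno : ∀ (i : ℕ) (hi : i < m), mv ⟨i, hi⟩ ≠ .P := by
      intro i
      induction i with
      | zero => intro hi h; rw [h0] at h; exact PMove.noConfusion h
      | succ n ih =>
        intro hi hC
        have ht := htrans n hi
        rw [hC] at ht
        cases h : mv ⟨n, Nat.lt_of_succ_lt hi⟩ with
        | ChR => rw [h] at ht; rcases ht with h' | h' | h' <;> exact PMove.noConfusion h'
        | P => exact ih (Nat.lt_of_succ_lt hi) h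
        | L => rw [h] at ht; exact PMove.noConfusion ht
        | R => rw [h] at ht; exact PMove.noConfusion ht
    have hmono : ∀ (i : ℕ) (hi : i < m), (V i).1 ≤ (V (i + 1)).1 := by
      intro i hi
      have hs := key i hi
      cases h : mv ⟨i, hi⟩ with
      | ChR => rw [h] at hs; obtain ⟨ha, hb⟩ := hs; omega
      | P => exact absurd h (hno i hi)
      | L => rw [h] at hs; obtain ⟨ha, hb⟩ := hs; omega
      | R => rw [h] at hs; obtain ⟨ha, hb⟩ := hs; omega
    have hchain : ∀ (i : ℕ), 1 ≤ i → i ≤ m → (V 1).1 ≤ (V i).1 := by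
      intro i
      induction i with
      | zero => omega
      | succ n ih =>
        intro _ hi
        rcases Nat.eq_zero_or_pos n with h | h
        · subst h; exact le_rfl
        · exact le_trans (ih h (by omega)) (hmono n (by omega))
    have hfirst := key 0 hm0
    rw [h0] at hfirst
    have h1 := hfirst.1
    norm_num at h1
    have hlast := hchain m hm0 le_rfl
    omega
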